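/- Let μ be a Borel probability measure on ℝ^d, let α be a k-flat (0 ≤ k < d), let π_α : ℝ^d → α^⊥ be orthogonal projection along α, and let μ_α be the pushforward of μ. Then depth_{μ_α}(π_α(α)) = depth_μ(α), i.e., the half-space depth of the point π_α(α) with respect to the projected measure equals the half-space depth of the flat α with respect to μ. -/

import Mathlib

open MeasureTheory

/-- The half-space (Tukey) depth of a point in an inner product space. -/
noncomputable def depthPt {W : Type*} [NormedAddCommGroup W] [InnerProductSpace ℝ W]
    [MeasurableSpace W] (ν : Measure W) (x : W) : ℝ :=
  sInf {r : ℝ | ∃ (m : W) (c : ℝ), m ≠ 0 ∧ (inner ℝ m x : ℝ) ≤ c ∧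
    r = (ν {y : W | (inner ℝ m y : ℝ) ≤ c}).toReal}

/-- The half-space depth of a set (e.g. a flat) `α`. -/
noncomputable def depthFlat (m : ℕ) (μ : Measure (EuclideanSpace ℝ (Fin m)))
    (α : Set (EuclideanSpace ℝ (Fin m))) : ℝ :=
  sInf {r : ℝ | ∃ (v : EuclideanSpace ℝ (Fin m)) (c : ℝ), v ≠ 0 ∧
    (∀ x ∈ α, (inner ℝ v x : ℝ) ≤ c) ∧
    r = (μ {y : EuclideanSpace ℝ (Fin m) | (inner ℝ v y : ℝ) ≤ c}).toReal}

/-!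
A closed half-space `{⟪v, ·⟫ ≤ c}` contains the flat `α` only if the linear functional `⟪v, ·⟫`
is bounded above on `α`, hence constant on it, i.e. `v ⊥ α.direction`. Such half-spaces are
exactly the preimages under `π_α` of the half-spaces of `α.directionᗮ` containing `π_α(α)`,
because `⟪v, x⟫ = ⟪v, π_α x⟫` for `v ∈ α.directionᗮ`. The two infima therefore run over the
same set of numbers.
-/

open scoped RealInnerProductSpace

variable {E : Type*} [NormedAddCommGroup E] [InnerProductSpace ℝ E]

theorem eq_zero_of_forall_mul_le {s b : ℝ} (h : ∀ t : ℝ, t * s ≤ b) : s = 0 := by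
  by_contra hs
  have := h ((b + 1) / s)
  rw [div_mul_cancel₀ _ hs] at this
  linarith

namespace AffineSubspace

variable {α : AffineSubspace ℝ E} {a v : E} {c : ℝ}

theorem mem_direction_orthogonal_of_forall_inner_le (ha : a ∈ α)
    (h : ∀ x ∈ α, ⟪v, x⟫ ≤ c) : v ∈ α.directionᗮ := by
  intro w hw
  rw [real_inner_comm]
  refine eq_zero_of_forall_mul_le (b := c - ⟪v, a⟫) fun t => ?_
  have := h (t • w +ᵥ a) (vadd_mem_of_mem_direction (α.direction.smul_mem t hw) ha)
  rw [vadd_eq_add, inner_add_right, real_inner_smul_right] at this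
  linarith

theorem inner_eq_of_mem_direction_orthogonal (hv : v ∈ α.directionᗮ) {x : E} (hx : x ∈ α)
    (ha : a ∈ α) : ⟪v, x⟫ = ⟪v, a⟫ := by
  have : ⟪v, x - a⟫ = 0 := by
    rw [real_inner_comm]
    exact hv _ (vsub_mem_direction hx ha)
  rwa [inner_sub_right, sub_eq_zero] at this

theorem forall_inner_le_iff_of_mem_direction_orthogonal (hv : v ∈ α.directionᗮ) (ha : a ∈ α) :
    (∀ x ∈ α, ⟪v, x⟫ ≤ c) ↔ ⟪v, a⟫ ≤ c :=
  ⟨fun h => h a ha, fun h _ hx => (inner_eq_of_mem_direction_orthogonal hv hx ha).le.trans h⟩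

end AffineSubspace

theorem Submodule.map_orthogonalProjectionOnto_apply_halfSpace [MeasurableSpace E] [BorelSpace E]
    (K : Submodule ℝ E) [K.HasOrthogonalProjection] (μ : Measure E) (m : K) (c : ℝ) :
    μ.map K.orthogonalProjectionOnto {y : K | ⟪m, y⟫ ≤ c} = μ {x : E | ⟪(m : E), x⟫ ≤ c} := by
  rw [Measure.map_apply K.orthogonalProjectionOnto.continuous.measurable
    (measurableSet_le (by fun_prop) measurable_const)]
  simp only [Set.preimage_ofPred_eq, Submodule.inner_orthogonalProjectionOnto_eq_of_mem_left]

theorem stmt17_general (d : ℕ)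
    (μ : Measure (EuclideanSpace ℝ (Fin d)))
    (α : AffineSubspace ℝ (EuclideanSpace ℝ (Fin d)))
    (a : EuclideanSpace ℝ (Fin d)) (ha : a ∈ α) :
    depthPt (μ.map (fun x => α.directionᗮ.orthogonalProjectionOnto x))
        (α.directionᗮ.orthogonalProjectionOnto a) =
      depthFlat d μ (α : Set (EuclideanSpace ℝ (Fin d))) := by
  set K := α.directionᗮ
  unfold depthPt depthFlat
  congr 1
  ext r
  constructor
  · rintro ⟨m, c, hm, hmc, rfl⟩
    refine ⟨m, c, by simpa using hm, ?_, ?_⟩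
    · refine (AffineSubspace.forall_inner_le_iff_of_mem_direction_orthogonal m.2 ha).2 ?_
      rwa [← Submodule.inner_orthogonalProjectionOnto_eq_of_mem_left]
    · rw [K.map_orthogonalProjectionOnto_apply_halfSpace]
  · rintro ⟨v, c, hv, hvc, rfl⟩
    have hvK : v ∈ K := AffineSubspace.mem_direction_orthogonal_of_forall_inner_le ha hvc
    refine ⟨⟨v, hvK⟩, c, by simpa using hv, ?_, ?_⟩
    · rw [Submodule.inner_orthogonalProjectionOnto_eq_of_mem_left]
      exact hvc a ha
    · rw [K.map_orthogonalProjectionOnto_apply_halfSpace]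

theorem stmt17 (d k : ℕ) (hk : k < d)
    (μ : Measure (EuclideanSpace ℝ (Fin d))) [IsProbabilityMeasure μ]
    (α : AffineSubspace ℝ (EuclideanSpace ℝ (Fin d)))
    (hne : (α : Set (EuclideanSpace ℝ (Fin d))).Nonempty)
    (hdim : Module.finrank ℝ α.direction = k)
    (a : EuclideanSpace ℝ (Fin d)) (ha : a ∈ α) :
    depthPt (μ.map (fun x => α.directionᗮ.orthogonalProjectionOnto x))
        (α.directionᗮ.orthogonalProjectionOnto a) =
      depthFlat d μ (α : Set (EuclideanSpace ℝ (Fin d))) :=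
  stmt17_general d μ α a ha
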